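/- Let F ⊆ {0,1,*}^d with D(x,y) ≥ 1 for all distinct x,y ∈ F, and suppose F is a partition, i.e., ∑_{x∈F} 2^{j(x)} = 2^d (equivalently, the subcubes H(x), x ∈ F, partition {0,1}^d). If moreover F is (d-1)-neighborly of maximum size among (d-1)-neighborly families, then the joker-free strings of F number exactly 2^{d-1} and the strings with exactly one joker number exactly 2^{d-2}. In particular every (d-1)-neighborly family of maximum size is a partition. -/

import Mathlib

open Finset

/-- Number of coordinates where one string has 0 and the other 1. -/
def Dd {d : ℕ} (x y : Fin d → Option Bool) : ℕ :=
  (univ.filter fun i => ∃ b : Bool, x i = some b ∧ y i = some !b).card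

/-- The subcube of binary strings agreeing with `x` on all non-joker coordinates. -/
def Hcube {d : ℕ} (x : Fin d → Option Bool) : Finset (Fin d → Bool) :=
  univ.filter fun u => ∀ i : Fin d, ∀ b : Bool, x i = some b → u i = b

/-- Number of joker (`*`) coordinates of `x`. -/
def jok {d : ℕ} (x : Fin d → Option Bool) : ℕ :=
  (univ.filter fun i => x i = none).card

/-- `k`-neighborly family of strings in `{0,1,*}^d`. -/
def Nbly {d : ℕ} (k : ℕ) (F : Finset (Fin d → Option Bool)) : Prop :=
  ∀ x ∈ F, ∀ y ∈ F, x ≠ y → 1 ≤ Dd x y ∧ Dd x y ≤ k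

/-- `n(k,d)`: maximum size of a `k`-neighborly family in `{0,1,*}^d`. -/
noncomputable def nbox (k d : ℕ) : ℕ :=
  sSup {n | ∃ F : Finset (Fin d → Option Bool), Nbly k F ∧ F.card = n}

/-!
Strings of `F` pairwise at distance at least one have disjoint subcubes, so the weights
`2 ^ j(x)` sum to at most `2 ^ d`. A `(d-1)`-neighborly family never contains a binary string
together with its antipode (they are at distance `d`), so it has at most `2 ^ (d-1)` joker-free
strings. The family of strings `0u` and `1*v` with `u, v` binary is `(d-1)`-neighborly of size
`3 · 2 ^ (d-2)`, so a maximum `F` is at least that large. Since a string with a joker weighs at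
least `2` and one with two jokers at least `4`, these three bounds are only compatible when
every string has at most one joker and all of them are attained.
-/

section

variable {d : ℕ}

@[simp]
lemma mem_Hcube {x : Fin d → Option Bool} {u : Fin d → Bool} :
    u ∈ Hcube x ↔ ∀ i b, x i = some b → u i = b := by
  simp [Hcube]

lemma Hcube_eq_piFinset (x : Fin d → Option Bool) :
    Hcube x = Fintype.piFinset fun i => (x i).elim univ singleton := by
  ext u
  simp only [mem_Hcube, Fintype.mem_piFinset]
  refine forall_congr' fun i => ?_
  cases x i <;> simp

lemma card_Hcube (x : Fin d → Option Bool) : #(Hcube x) = 2 ^ jok x := by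
  have hcard (i : Fin d) : #((x i).elim univ singleton) = if x i = none then 2 else 1 := by
    cases x i <;> simp
  rw [Hcube_eq_piFinset, Fintype.card_piFinset, prod_congr rfl fun i _ => hcard i, prod_ite,
    prod_const, prod_const, one_pow, mul_one, jok]

lemma disjoint_Hcube_of_one_le_Dd {x y : Fin d → Option Bool} (h : 1 ≤ Dd x y) :
    Disjoint (Hcube x) (Hcube y) := by
  obtain ⟨i, hi⟩ := card_pos.mp h
  obtain ⟨b, hxb, hyb⟩ := (mem_filter.mp hi).2
  refine disjoint_left.mpr fun u hux huy => ?_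
  have := (mem_Hcube.mp hux i b hxb).symm.trans (mem_Hcube.mp huy i _ hyb)
  cases b <;> simp at this

lemma sum_two_pow_jok_le {F : Finset (Fin d → Option Bool)}
    (hF : (F : Set (Fin d → Option Bool)).Pairwise fun x y => 1 ≤ Dd x y) :
    ∑ x ∈ F, 2 ^ jok x ≤ 2 ^ d :=
  calc ∑ x ∈ F, 2 ^ jok x = #(F.biUnion Hcube) := by
        rw [card_biUnion (t := Hcube) (hF.mono' fun _ _ => disjoint_Hcube_of_one_le_Dd)]
        simp only [card_Hcube]
    _ ≤ #(univ : Finset (Fin d → Bool)) := card_le_univ _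
    _ = 2 ^ d := by simp

def ofBinary (u : Fin d → Bool) : Fin d → Option Bool := fun i => some (u i)

lemma ofBinary_injective : Function.Injective (ofBinary (d := d)) :=
  fun _ _ h => funext fun i => Option.some_injective _ (congrFun h i)

lemma jok_eq_zero_iff {x : Fin d → Option Bool} : jok x = 0 ↔ ∃ u, ofBinary u = x := by
  constructor
  · intro h
    refine ⟨fun i => (x i).getD false, funext fun i => ?_⟩
    have hi : x i ≠ none := fun hi => (filter_eq_empty_iff.mp (card_eq_zero.mp h)) (mem_univ i) hi
    cases hx : x i
    exacts [absurd hx hi, by simp [ofBinary, hx]]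
  · rintro ⟨u, rfl⟩
    simp [jok, ofBinary]

lemma Dd_ofBinary (u v : Fin d → Bool) : Dd (ofBinary u) (ofBinary v) = hammingDist u v := by
  simp only [Dd, hammingDist, ofBinary]
  congr 1
  ext i
  simp only [mem_filter, mem_univ, true_and, Option.some.injEq, exists_eq_left']
  cases u i <;> cases v i <;> decide

lemma hammingDist_compl_self (u : Fin d → Bool) : hammingDist u uᶜ = d := by
  simp [hammingDist]

lemma two_mul_card_filter_jok_eq_zero_le (hd : d ≠ 0) {F : Finset (Fin d → Option Bool)}
    (hF : Nbly (d - 1) F) : 2 * #(F.filter (jok · = 0)) ≤ 2 ^ d := by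
  set T := univ.filter fun u => ofBinary u ∈ F
  have hle : #(F.filter (jok · = 0)) ≤ #T := by
    refine (card_le_card fun x hx => ?_).trans (card_image_le (f := ofBinary))
    obtain ⟨hxF, hx0⟩ := mem_filter.mp hx
    obtain ⟨u, rfl⟩ := jok_eq_zero_iff.mp hx0
    exact mem_image_of_mem _ (by simpa [T] using hxF)
  -- a string and its antipode are at distance `d > d - 1`
  have hdisj : Disjoint T (T.image compl) := by
    refine disjoint_left.mpr fun u hu hu' => ?_
    obtain ⟨v, hv, rfl⟩ := mem_image.mp hu'
    have hdist : Dd (ofBinary v) (ofBinary vᶜ) = d := by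
      rw [Dd_ofBinary, hammingDist_compl_self]
    have hne : ofBinary v ≠ ofBinary vᶜ :=
      ofBinary_injective.ne (hammingDist_ne_zero.mp (by rwa [hammingDist_compl_self]))
    have := (hF _ (mem_filter.mp hv).2 _ (mem_filter.mp hu).2 hne).2
    omega
  have hunion : #T + #(T.image compl) ≤ 2 ^ d := by
    rw [← card_union_of_disjoint hdisj]
    simpa using card_le_univ (T ∪ T.image compl)
  rw [card_image_of_injective _ compl_injective] at hunion
  omega

lemma Dd_comm (x y : Fin d → Option Bool) : Dd x y = Dd y x := by
  simp only [Dd]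
  congr 1
  ext i
  simp only [mem_filter, mem_univ, true_and]
  constructor <;> rintro ⟨b, hx, hy⟩ <;> exact ⟨!b, hy, by simpa using hx⟩

lemma Dd_cons (a b : Option Bool) (x y : Fin d → Option Bool) :
    Dd (Fin.cons a x : Fin (d + 1) → Option Bool) (Fin.cons b y) =
      (if ∃ c, a = some c ∧ b = some !c then 1 else 0) + Dd x y := by
  simp only [Dd, card_filter, Fin.sum_univ_succ, Fin.cons_zero, Fin.cons_succ]

lemma Dd_cons_self (a : Option Bool) (x y : Fin d → Option Bool) :
    Dd (Fin.cons a x : Fin (d + 1) → Option Bool) (Fin.cons a y) = Dd x y := by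
  rw [Dd_cons, if_neg, zero_add]
  rintro ⟨c, rfl, h⟩
  cases c <;> simp at h

lemma Dd_le_pred_of_eq_none {x y : Fin d → Option Bool} {i : Fin d} (hy : y i = none) :
    Dd x y ≤ d - 1 := by
  calc Dd x y ≤ #(univ.erase i) := by
        refine card_le_card fun j hj => mem_erase.mpr ⟨?_, mem_univ j⟩
        rintro rfl
        obtain ⟨b, -, hb⟩ := (mem_filter.mp hj).2
        simp [hy] at hb
    _ = d - 1 := by simp

end

def nblyExample (e : ℕ) : Finset (Fin (e + 2) → Option Bool) :=
  univ.image (fun u : Fin (e + 1) → Bool => Fin.cons (some false) (ofBinary u)) ∪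
    univ.image fun v : Fin e → Bool => Fin.cons (some true) (Fin.cons none (ofBinary v))

lemma card_nblyExample (e : ℕ) : #(nblyExample e) = 3 * 2 ^ e := by
  rw [nblyExample, card_union_of_disjoint, card_image_of_injective, card_image_of_injective]
  · simp only [card_univ, Fintype.card_fun, Fintype.card_bool, Fintype.card_fin]
    ring
  · exact (Fin.cons_right_injective _).comp ((Fin.cons_right_injective _).comp ofBinary_injective)
  · exact (Fin.cons_right_injective _).comp ofBinary_injective
  · simp [disjoint_left, Fin.cons_inj]

lemma nbly_nblyExample (e : ℕ) : Nbly (e + 1) (nblyExample e) := by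
  simp only [Nbly, nblyExample, mem_union, mem_image, mem_univ, true_and]
  rintro x (⟨u, rfl⟩ | ⟨v, rfl⟩) y (⟨u', rfl⟩ | ⟨v', rfl⟩) hne
  · have huu' : u ≠ u' := by simpa [Fin.cons_inj, ofBinary_injective.eq_iff] using hne
    rw [Dd_cons_self, Dd_ofBinary]
    exact ⟨hammingDist_pos.mpr huu', hammingDist_le_card_fintype.trans_eq (Fintype.card_fin _)⟩
  · have := Dd_le_pred_of_eq_none (x := ofBinary u) (y := Fin.cons none (ofBinary v')) (i := 0) rfl
    rw [Dd_cons, if_pos ⟨false, rfl, rfl⟩]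
    omega
  · have := Dd_le_pred_of_eq_none (x := ofBinary u') (y := Fin.cons none (ofBinary v)) (i := 0) rfl
    rw [Dd_cons, if_pos ⟨true, rfl, rfl⟩, Dd_comm]
    omega
  · have hvv' : v ≠ v' := by simpa [Fin.cons_inj, ofBinary_injective.eq_iff] using hne
    rw [Dd_cons_self, Dd_cons_self, Dd_ofBinary]
    exact ⟨hammingDist_pos.mpr hvv', hammingDist_le_card_fintype.trans (by simp)⟩

lemma two_mul_card_add_le_sum_two_pow {α : Type*} (F : Finset α) (f : α → ℕ) :
    2 * #F + 2 * #(F.filter (2 ≤ f ·)) ≤ ∑ x ∈ F, 2 ^ f x + #(F.filter (f · = 0)) := by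
  rw [card_filter, card_filter, card_eq_sum_ones, mul_sum, mul_sum, ← sum_add_distrib,
    ← sum_add_distrib]
  refine sum_le_sum fun x _ => ?_
  rcases f x with _ | _ | k
  · simp
  · simp
  · simpa [pow_succ, mul_assoc] using Nat.mul_le_mul_right 4 (Nat.one_le_two_pow (n := k))

theorem stmt_15 {d : ℕ} (hd : 2 ≤ d) (F : Finset (Fin d → Option Bool))
    (hF : Nbly (d - 1) F)
    (hmax : ∀ G : Finset (Fin d → Option Bool), Nbly (d - 1) G → G.card ≤ F.card) :
    (F.filter fun x => jok x = 0).card = 2 ^ (d - 1) ∧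
    (F.filter fun x => jok x = 1).card = 2 ^ (d - 2) ∧
    ∑ x ∈ F, 2 ^ jok x = 2 ^ d := by
  obtain ⟨e, rfl⟩ : ∃ e, d = e + 2 := ⟨d - 2, by omega⟩
  have hcard : 3 * 2 ^ e ≤ #F := card_nblyExample e ▸ hmax _ (nbly_nblyExample e)
  have hvol := sum_two_pow_jok_le fun x hx y hy hxy => (hF x hx y hy hxy).1
  have hfree := two_mul_card_filter_jok_eq_zero_le (by omega) hF
  have hweight := two_mul_card_add_le_sum_two_pow F jok
  have hsplit := card_filter_add_card_filter_not (s := F) (jok · = 0)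
  rw [pow_succ, pow_succ] at hvol hfree
  have hno2 : F.filter (2 ≤ jok ·) = ∅ := card_eq_zero.mp (by omega)
  have hone : F.filter (jok · = 1) = F.filter (¬ jok · = 0) := filter_congr fun x hx => by
    have := filter_eq_empty_iff.mp hno2 hx
    omega
  simp only [Nat.add_succ_sub_one, Nat.add_sub_cancel, hone, pow_succ]
  omega
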